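/- (Commutator form of the Wigner–Yanase information matrix.) With I^{WY}_{ij}(φ) = Σ_{k,ℓ<d} (4/(√λ_k + √λ_ℓ)²) ⟨k| D_i |ℓ⟩ ⟨ℓ| D_j |k⟩ (where D_i = ∂_i ρ(φ)), one has for all i, j ∈ {1,…,J}: I^{WY}_{ij}(φ) = −4 · Tr[[A_i, √ρ] [A_j, √ρ]], where √ρ = e^{−G/2}/√Z, A_j = U_{R_j}† H_j U_{R_j}, and [X,Y] = XY − YX. -/

import Mathlib

open Matrix

noncomputable section

attribute [local instance] Matrix.linftyOpNormedAddCommGroup Matrix.linftyOpNormedSpace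

/-- Square complex matrices of size `d`. -/
abbrev Mat (d : ℕ) := Matrix (Fin d) (Fin d) ℂ

/-- Descending product `f (a + n - 1) * ⋯ * f (a + 1) * f a` (empty product is `1`). -/
def descProd {d : ℕ} (f : ℕ → Mat d) (a : ℕ) : ℕ → Mat d
  | 0 => 1
  | n + 1 => f (a + n) * descProd f a n

/-- The `j`-th layer `U_j(φ_j) = exp (−i φ_j H_j) V_j`. -/
def layer {d : ℕ} (H V : ℕ → Mat d) (φ : ℕ → ℝ) (j : ℕ) : Mat d :=
  NormedSpace.exp ((-(Complex.I * (φ j : ℂ))) • H j) * V j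

/-- `U_{R_j} = U_j ⋯ U_1`. -/
def UR {d : ℕ} (H V : ℕ → Mat d) (φ : ℕ → ℝ) (j : ℕ) : Mat d :=
  descProd (layer H V φ) 1 j

/-- `U_{L_j} = U_J ⋯ U_j`. -/
def UL {d : ℕ} (H V : ℕ → Mat d) (φ : ℕ → ℝ) (J j : ℕ) : Mat d :=
  descProd (layer H V φ) j (J + 1 - j)

/-- The full layered circuit `U(φ) = U_J ⋯ U_1`. -/
def Ufull {d : ℕ} (H V : ℕ → Mat d) (φ : ℕ → ℝ) (J : ℕ) : Mat d :=
  UR H V φ J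

/-- `B_j = U_{L_{j+1}} H_j U_{L_{j+1}}†`. -/
def Bmat {d : ℕ} (H V : ℕ → Mat d) (φ : ℕ → ℝ) (J j : ℕ) : Mat d :=
  UL H V φ J (j + 1) * H j * (UL H V φ J (j + 1))ᴴ

/-- `A_j = U_{R_j}† H_j U_{R_j}`. -/
def Amat {d : ℕ} (H V : ℕ → Mat d) (φ : ℕ → ℝ) (j : ℕ) : Mat d :=
  (UR H V φ j)ᴴ * H j * UR H V φ j

/-- The thermal state `ρ = e^{−G}/Z`. -/
def thermal {d : ℕ} (G : Mat d) (Z : ℝ) : Mat d :=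
  (Z : ℂ)⁻¹ • NormedSpace.exp (-G)

/-- The parameterized state `ρ(φ) = U(φ) ρ U(φ)†`. -/
def rhoFun {d : ℕ} (H V : ℕ → Mat d) (J : ℕ) (G : Mat d) (Z : ℝ) (φ : ℕ → ℝ) : Mat d :=
  Ufull H V φ J * thermal G Z * (Ufull H V φ J)ᴴ

/-- The sesquilinear form `⟨u| M |v⟩`, conjugate-linear in `u`. -/
def braket {d : ℕ} (u : Fin d → ℂ) (M : Mat d) (v : Fin d → ℂ) : ℂ :=
  star u ⬝ᵥ M.mulVec v

/-- `√ρ = e^{−G/2}/√Z`, the square root of the thermal state. -/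
def sqrtThermal {d : ℕ} (G : Mat d) (Z : ℝ) : Mat d :=
  ((Real.sqrt Z : ℂ))⁻¹ • NormedSpace.exp ((-(2⁻¹ : ℂ)) • G)

/-!
Differentiating `ρ(φ) = U ρ U†` in `φ_i` only hits the factor `exp (-i φ_i H_i)` of `U`, so
`∂_i U = -i U A_i` and `D_i = -i U [A_i, ρ] U†`. In the basis `|k⟩ = U |k̃⟩` this reads
`⟨k| D_i |l⟩ = -i (λ_l - λ_k) ⟨k̃| A_i |l̃⟩`. On the other side, `√ρ` is positive semidefinite with
square `ρ`, so `√ρ |k̃⟩ = √λ_k |k̃⟩` and `⟨k̃| [A_i, √ρ] |l̃⟩ = (√λ_l - √λ_k) ⟨k̃| A_i |l̃⟩`.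
Expanding the trace in the orthonormal basis `|k̃⟩`, both sides agree term by term since
`λ_l - λ_k = (√λ_l - √λ_k) (√λ_l + √λ_k)`.
-/

attribute [local instance] Matrix.linftyOpNormedRing Matrix.linftyOpNormedAlgebra

open scoped ComplexOrder

theorem HasDerivAt.matrix_conjTranspose {n : Type*} [Fintype n] {f : ℝ → Matrix n n ℂ}
    {f' : Matrix n n ℂ} {t : ℝ} (hf : HasDerivAt f f' t) :
    HasDerivAt (fun x => (f x)ᴴ) f'ᴴ t :=
  -- `ContinuousStar` is needed for the norm topology, which is not syntactically the product one
  @HasDerivAt.star ℝ _ _ (Matrix n n ℂ) _ _ _ _ ⟨continuous_id.matrix_conjTranspose⟩ f f' t _ hf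

theorem HasDerivAt.mul_mul_conjTranspose {n : Type*} [Fintype n] [DecidableEq n]
    {U : ℝ → Matrix n n ℂ} {U' : Matrix n n ℂ} {t : ℝ} (hU : HasDerivAt U U' t)
    (M : Matrix n n ℂ) :
    HasDerivAt (fun x => U x * M * (U x)ᴴ) (U' * M * (U t)ᴴ + U t * M * U'ᴴ) t :=
  (hU.mul_const M).mul hU.matrix_conjTranspose

theorem exp_mem_unitaryGroup_of_conjTranspose_eq_neg {n : Type*} [Fintype n] [DecidableEq n]
    {A : Matrix n n ℂ} (hA : Aᴴ = -A) : NormedSpace.exp A ∈ unitaryGroup n ℂ := by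
  rw [mem_unitaryGroup_iff', star_eq_conjTranspose, ← exp_conjTranspose, hA,
    ← exp_add_of_commute _ _ (Commute.refl A).neg_left, neg_add_cancel, NormedSpace.exp_zero]

theorem real_smul_smul_eq_smul {n : Type*} (x : ℝ) (c : ℂ) (K : Matrix n n ℂ) :
    x • (c • K) = (c * x) • K := by
  rw [← Complex.coe_smul, smul_smul, mul_comm]

section Circuit

variable {d : ℕ}

theorem descProd_add (f : ℕ → Mat d) (a m n : ℕ) :
    descProd f a (n + m) = descProd f (a + m) n * descProd f a m := by
  induction n with
  | zero => simp [descProd]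
  | succ n ih =>
    rw [Nat.add_right_comm, descProd, ih, descProd, Nat.add_assoc a m n, Nat.add_comm m n,
      mul_assoc]

theorem descProd_congr {f g : ℕ → Mat d} {a n : ℕ} (h : ∀ k < n, f (a + k) = g (a + k)) :
    descProd f a n = descProd g a n := by
  induction n with
  | zero => rfl
  | succ n ih => rw [descProd, descProd, h n n.lt_succ_self, ih fun k hk => h k (by omega)]

theorem descProd_mem_unitaryGroup {f : ℕ → Mat d} (hf : ∀ k, f k ∈ unitaryGroup (Fin d) ℂ)
    (a n : ℕ) : descProd f a n ∈ unitaryGroup (Fin d) ℂ := by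
  induction n with
  | zero => exact one_mem _
  | succ n ih => exact mul_mem (hf _) ih

variable (H V : ℕ → Mat d) (φ : ℕ → ℝ)

theorem layer_mem_unitaryGroup (hH : ∀ j, (H j).IsHermitian)
    (hV : ∀ j, V j ∈ unitaryGroup (Fin d) ℂ) (j : ℕ) :
    layer H V φ j ∈ unitaryGroup (Fin d) ℂ := by
  refine mul_mem (exp_mem_unitaryGroup_of_conjTranspose_eq_neg ?_) (hV j)
  rw [conjTranspose_smul, (hH j).eq, ← neg_smul]
  congr 1
  simp

theorem UR_mem_unitaryGroup (hH : ∀ j, (H j).IsHermitian)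
    (hV : ∀ j, V j ∈ unitaryGroup (Fin d) ℂ) (j : ℕ) :
    UR H V φ j ∈ unitaryGroup (Fin d) ℂ :=
  descProd_mem_unitaryGroup (layer_mem_unitaryGroup H V φ hH hV) 1 j

theorem UR_succ (i : ℕ) : UR H V φ (i + 1) = layer H V φ (i + 1) * UR H V φ i := by
  rw [UR, descProd, Nat.add_comm 1 i]
  rfl

theorem Ufull_eq_mul_UR {i J : ℕ} (hiJ : i ≤ J) :
    Ufull H V φ J = descProd (layer H V φ) (i + 1) (J - i) * UR H V φ i := by
  rw [Ufull, UR, UR, ← Nat.sub_add_cancel hiJ, descProd_add, Nat.sub_add_cancel hiJ,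
    Nat.add_comm 1 i]

theorem descProd_layer_update {j a n : ℕ} (x : ℝ) (h : ∀ k < n, a + k ≠ j) :
    descProd (layer H V (Function.update φ j x)) a n = descProd (layer H V φ) a n :=
  descProd_congr fun k hk => by simp [layer, Function.update_of_ne (h k hk)]

theorem hasDerivAt_layer_update (j : ℕ) :
    HasDerivAt (fun x : ℝ => layer H V (Function.update φ j x) j)
      ((-Complex.I) • H j * layer H V φ j) (φ j) := by
  have hfun : (fun x : ℝ => layer H V (Function.update φ j x) j) =
      fun x : ℝ => NormedSpace.exp (x • (-Complex.I) • H j) * V j := by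
    funext x
    simp [layer, real_smul_smul_eq_smul]
  have hderiv : (-Complex.I) • H j * NormedSpace.exp (φ j • (-Complex.I) • H j) * V j =
      (-Complex.I) • H j * layer H V φ j := by
    simp [layer, real_smul_smul_eq_smul, mul_assoc]
  rw [hfun]
  exact ((hasDerivAt_exp_smul_const' _ _).mul_const (V j)).congr_deriv hderiv

theorem hasDerivAt_Ufull_update (hH : ∀ j, (H j).IsHermitian)
    (hV : ∀ j, V j ∈ unitaryGroup (Fin d) ℂ) {i J : ℕ} (hi1 : 1 ≤ i) (hiJ : i ≤ J) :
    HasDerivAt (fun x : ℝ => Ufull H V (Function.update φ i x) J)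
      ((-Complex.I) • (Ufull H V φ J * Amat H V φ i)) (φ i) := by
  obtain ⟨i, rfl⟩ := Nat.exists_eq_add_of_le' hi1
  set C := descProd (layer H V φ) (i + 1 + 1) (J - (i + 1))
  have hfun : ∀ x : ℝ, Ufull H V (Function.update φ (i + 1) x) J =
      C * (layer H V (Function.update φ (i + 1) x) (i + 1) * UR H V φ i) := by
    intro x
    rw [Ufull_eq_mul_UR _ _ _ hiJ, UR_succ, descProd_layer_update _ _ _ _ (by omega), UR,
      UR, descProd_layer_update _ _ _ _ (by omega)]
  have hUA : Ufull H V φ J * Amat H V φ (i + 1) = C * (H (i + 1) * UR H V φ (i + 1)) := by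
    have hunit := Unitary.mul_star_self_of_mem (UR_mem_unitaryGroup H V φ hH hV (i + 1))
    rw [star_eq_conjTranspose] at hunit
    rw [Ufull_eq_mul_UR _ _ _ hiJ, Amat]
    simp only [C, mul_assoc, ← mul_assoc (UR H V φ (i + 1)) _ _, hunit, one_mul]
  rw [funext hfun, hUA, UR_succ]
  exact (((hasDerivAt_layer_update H V φ (i + 1)).mul_const (UR H V φ i)).const_mul C).congr_deriv
    (by simp only [smul_mul, mul_smul_comm, mul_assoc])

end Circuit

theorem hasDerivAt_rhoFun_update {d J i : ℕ} (H V : ℕ → Mat d) (hH : ∀ j, (H j).IsHermitian)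
    (hV : ∀ j, V j ∈ unitaryGroup (Fin d) ℂ) (G : Mat d) (Z : ℝ) (φ : ℕ → ℝ)
    (hi1 : 1 ≤ i) (hiJ : i ≤ J) :
    HasDerivAt (fun x : ℝ => rhoFun H V J G Z (Function.update φ i x))
      ((-Complex.I) • (Ufull H V φ J *
        (Amat H V φ i * thermal G Z - thermal G Z * Amat H V φ i) * (Ufull H V φ J)ᴴ))
      (φ i) := by
  set U := Ufull H V φ J
  set A := Amat H V φ i
  set ρ := thermal G Z
  have hA : Aᴴ = A := isHermitian_conjTranspose_mul_mul _ (hH i)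
  have hderiv : (-Complex.I) • (U * A) * ρ * Uᴴ + U * ρ * ((-Complex.I) • (U * A))ᴴ =
      (-Complex.I) • (U * (A * ρ - ρ * A) * Uᴴ) := by
    simp only [conjTranspose_smul, conjTranspose_mul, hA, star_neg, Complex.star_def,
      Complex.conj_I, smul_mul, mul_smul_comm, mul_sub, sub_mul, mul_assoc, smul_sub]
    module
  have hρ := (hasDerivAt_Ufull_update H V φ hH hV hi1 hiJ).mul_mul_conjTranspose ρ
  rw [Function.update_eq_self] at hρ
  exact hρ.congr_deriv hderiv

section Spectral

variable {d : ℕ}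

theorem braket_smul (u : Fin d → ℂ) (c : ℂ) (M : Mat d) (w : Fin d → ℂ) :
    braket u (c • M) w = c * braket u M w := by
  rw [braket, braket, smul_mulVec, dotProduct_smul, smul_eq_mul]

theorem braket_mulVec_mulVec (U N : Mat d) (a b : Fin d → ℂ) :
    braket (U *ᵥ a) N (U *ᵥ b) = braket a (Uᴴ * N * U) b := by
  rw [braket, braket, ← mulVec_mulVec, ← mulVec_mulVec, dotProduct_mulVec (star a),
    ← star_mulVec]

theorem braket_commutator_of_mulVec_eq_smul {S : Mat d} (hS : S.IsHermitian) (A : Mat d)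
    {u w : Fin d → ℂ} {a b : ℝ} (hu : S *ᵥ u = (a : ℂ) • u) (hw : S *ᵥ w = (b : ℂ) • w) :
    braket u (A * S - S * A) w = ((b : ℂ) - a) * braket u A w := by
  have hleft : star u ᵥ* S = (a : ℂ) • star u := by
    rw [← hS.eq, ← star_mulVec, hu, star_smul, Complex.star_def, Complex.conj_ofReal]
  simp only [braket, sub_mulVec, ← mulVec_mulVec, dotProduct_sub, hw, mulVec_smul,
    dotProduct_smul, dotProduct_mulVec (star u) S, hleft, smul_dotProduct, smul_eq_mul]
  ring

theorem trace_mul_eq_sum_braket {v : Fin d → Fin d → ℂ}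
    (hortho : ∀ k l, star (v k) ⬝ᵥ v l = if k = l then 1 else 0) (X Y : Mat d) :
    (X * Y).trace = ∑ k, ∑ l, braket (v k) X (v l) * braket (v l) Y (v k) := by
  set W : Mat d := of fun m k => v k m
  have hentry : ∀ (N : Mat d) k l, braket (v k) N (v l) = (Wᴴ * N * W) k l := by
    intro N k l
    simp only [braket, W, mul_apply, conjTranspose_apply, of_apply, mulVec, dotProduct,
      Pi.star_apply, Finset.sum_mul, Finset.mul_sum]
    rw [Finset.sum_comm]
    exact Finset.sum_congr rfl fun _ _ => Finset.sum_congr rfl fun _ _ => by ring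
  have hWW : Wᴴ * W = 1 := by
    ext k l
    simpa [W, mul_apply, one_apply, dotProduct] using hortho k l
  have hWW' : W * Wᴴ = 1 := mul_eq_one_comm.mp hWW
  have hconj : Wᴴ * X * W * (Wᴴ * Y * W) = Wᴴ * (X * Y * W) := by
    simp only [mul_assoc, ← mul_assoc W Wᴴ, hWW', one_mul]
  calc (X * Y).trace = (Wᴴ * X * W * (Wᴴ * Y * W)).trace := by
        rw [hconj, trace_mul_comm Wᴴ, mul_assoc, hWW', mul_one]
    _ = ∑ k, ∑ l, braket (v k) X (v l) * braket (v l) Y (v k) := by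
        simp only [trace, diag, Matrix.mul_apply (M := Wᴴ * X * W), hentry]

end Spectral

theorem Matrix.PosSemidef.mulVec_eq_sqrt_smul {n : Type*} [Fintype n] [DecidableEq n]
    {S : Matrix n n ℂ} (hS : S.PosSemidef) {μ : ℝ} (hμ : 0 < μ) {w : n → ℂ}
    (hw : (S * S) *ᵥ w = (μ : ℂ) • w) : S *ᵥ w = (Real.sqrt μ : ℂ) • w := by
  set c : ℝ := Real.sqrt μ
  have hc : (c : ℂ) * c = μ := by exact_mod_cast Real.mul_self_sqrt hμ.le
  -- `S + c` is positive definite, and it kills `S w - c w` because `(S + c)(S - c) = S² - μ`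
  have hpd : (S + (c : ℂ) • 1).PosDef :=
    PosDef.posSemidef_add hS (PosDef.one.smul (by exact_mod_cast Real.sqrt_pos.mpr hμ))
  have hkill : (S + (c : ℂ) • 1) *ᵥ (S *ᵥ w - (c : ℂ) • w) = 0 := by
    rw [add_mulVec, mulVec_sub, mulVec_sub, mulVec_mulVec, hw, mulVec_smul, smul_mulVec,
      smul_mulVec, one_mulVec, one_mulVec, smul_smul, hc]
    abel
  have hinj := mulVec_injective_iff_isUnit.mpr hpd.isUnit
  exact sub_eq_zero.mp (hinj (hkill.trans (mulVec_zero _).symm))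

section Thermal

variable {d : ℕ} {G : Mat d}

theorem sqrtThermal_mul_self (G : Mat d) {Z : ℝ} (hZ : 0 < Z) :
    sqrtThermal G Z * sqrtThermal G Z = thermal G Z := by
  rw [sqrtThermal, thermal, smul_mul, mul_smul_comm, smul_smul,
    ← exp_add_of_commute _ _ (Commute.refl _), ← add_smul, ← mul_inv, ← Complex.ofReal_mul,
    Real.mul_self_sqrt hZ.le]
  norm_num

theorem posSemidef_sqrtThermal (hG : G.IsHermitian) (Z : ℝ) :
    (sqrtThermal G Z).PosSemidef := by
  set E := NormedSpace.exp ((-(4⁻¹ : ℂ)) • G)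
  have hE : Eᴴ = E := by
    rw [← exp_conjTranspose, conjTranspose_smul, hG.eq]
    congr 2
    simp
  have hEE : NormedSpace.exp ((-(2⁻¹ : ℂ)) • G) = Eᴴ * E := by
    rw [hE, ← exp_add_of_commute _ _ (Commute.refl _), ← add_smul]
    norm_num
  rw [sqrtThermal, hEE, ← Complex.ofReal_inv, Complex.coe_smul]
  exact (posSemidef_conjTranspose_mul_self E).smul (inv_nonneg.mpr (Real.sqrt_nonneg Z))

theorem isHermitian_thermal (hG : G.IsHermitian) {Z : ℝ} (hZ : 0 < Z) :
    (thermal G Z).IsHermitian := by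
  rw [← sqrtThermal_mul_self G hZ]
  nth_rw 1 [← (posSemidef_sqrtThermal hG Z).isHermitian.eq]
  exact isHermitian_conjTranspose_mul_self _

end Thermal

theorem braket_of_hasDerivAt_rhoFun {d J i : ℕ} {H V : ℕ → Mat d} (hH : ∀ j, (H j).IsHermitian)
    (hV : ∀ j, V j ∈ unitaryGroup (Fin d) ℂ) {G : Mat d} (hG : G.IsHermitian) {Z : ℝ}
    (hZ : 0 < Z) {φ : ℕ → ℝ} (hi1 : 1 ≤ i) (hiJ : i ≤ J) {D : Mat d}
    (hD : HasDerivAt (fun x : ℝ => rhoFun H V J G Z (Function.update φ i x)) D (φ i))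
    {u w : Fin d → ℂ} {a b : ℝ} (hu : thermal G Z *ᵥ u = (a : ℂ) • u)
    (hw : thermal G Z *ᵥ w = (b : ℂ) • w) :
    braket (Ufull H V φ J *ᵥ u) D (Ufull H V φ J *ᵥ w) =
      -Complex.I * (((b : ℂ) - a) * braket u (Amat H V φ i) w) := by
  set U := Ufull H V φ J
  have hU : Uᴴ * U = 1 := by
    rw [← star_eq_conjTranspose]
    exact Unitary.star_mul_self_of_mem (UR_mem_unitaryGroup H V φ hH hV J)
  have hconj : ∀ X : Mat d, Uᴴ * (U * X * Uᴴ) * U = X := fun X => by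
    simp only [mul_assoc, ← mul_assoc Uᴴ U, hU, one_mul, mul_one]
  rw [hD.unique (hasDerivAt_rhoFun_update H V hH hV G Z φ hi1 hiJ), braket_mulVec_mulVec,
    mul_smul_comm, smul_mul, hconj, braket_smul,
    braket_commutator_of_mulVec_eq_smul (isHermitian_thermal hG hZ) _ hu hw]

theorem four_div_sq_add_sqrt_mul {p q : ℝ} (hp : 0 < p) (hq : 0 < q) (a b : ℂ) :
    ((4 / (Real.sqrt p + Real.sqrt q) ^ 2 : ℝ) : ℂ) *
        (-Complex.I * (((q : ℂ) - p) * a)) * (-Complex.I * (((p : ℂ) - q) * b)) =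
      -4 * (((Real.sqrt q : ℂ) - Real.sqrt p) * a * (((Real.sqrt p : ℂ) - Real.sqrt q) * b)) := by
  -- `q - p = (√q - √p) (√q + √p)`, and `√p + √q ≠ 0`
  have hsum : (Real.sqrt p : ℂ) + Real.sqrt q ≠ 0 := by
    exact_mod_cast (add_pos (Real.sqrt_pos.mpr hp) (Real.sqrt_pos.mpr hq)).ne'
  have hp' : (p : ℂ) = (Real.sqrt p : ℂ) ^ 2 := by exact_mod_cast (Real.sq_sqrt hp.le).symm
  have hq' : (q : ℂ) = (Real.sqrt q : ℂ) ^ 2 := by exact_mod_cast (Real.sq_sqrt hq.le).symm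
  rw [hp', hq']
  push_cast
  field_simp
  ring_nf
  rw [Complex.I_sq]
  ring

theorem wigner_yanase_commutator_form_pqc_general {d J : ℕ}
    (H V G : _) (hH : ∀ j, (H j : Mat d).IsHermitian)
    (hV : ∀ j, V j ∈ Matrix.unitaryGroup (Fin d) ℂ)
    (hG : (G : Mat d).IsHermitian)
    (Z : ℝ) (hZpos : 0 < Z)
    (v : Fin d → Fin d → ℂ)
    (hortho : ∀ k l, star (v k) ⬝ᵥ v l = if k = l then 1 else 0)
    (lam : Fin d → ℝ) (hlampos : ∀ k, 0 < lam k)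
    (hrhov : ∀ k, (thermal G Z).mulVec (v k) = (lam k : ℂ) • v k)
    (φ : ℕ → ℝ) (i j : ℕ) (hi1 : 1 ≤ i) (hiJ : i ≤ J) (hj1 : 1 ≤ j) (hjJ : j ≤ J)
    (Di Dj : Mat d)
    (hDi : HasDerivAt (fun x : ℝ => rhoFun H V J G Z (Function.update φ i x)) Di (φ i))
    (hDj : HasDerivAt (fun x : ℝ => rhoFun H V J G Z (Function.update φ j x)) Dj (φ j)) :
    ∑ k : Fin d, ∑ l : Fin d,
        ((4 / (Real.sqrt (lam k) + Real.sqrt (lam l)) ^ 2 : ℝ) : ℂ) *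
          braket ((Ufull H V φ J).mulVec (v k)) Di ((Ufull H V φ J).mulVec (v l)) *
          braket ((Ufull H V φ J).mulVec (v l)) Dj ((Ufull H V φ J).mulVec (v k)) =
      -4 * ((Amat H V φ i * sqrtThermal G Z - sqrtThermal G Z * Amat H V φ i) *
          (Amat H V φ j * sqrtThermal G Z - sqrtThermal G Z * Amat H V φ j)).trace := by
  have hS := posSemidef_sqrtThermal hG Z
  have hSv : ∀ k, sqrtThermal G Z *ᵥ v k = (Real.sqrt (lam k) : ℂ) • v k := fun k =>
    hS.mulVec_eq_sqrt_smul (hlampos k) (by rw [sqrtThermal_mul_self G hZpos, hrhov])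
  rw [trace_mul_eq_sum_braket hortho, Finset.mul_sum]
  refine Finset.sum_congr rfl fun k _ => ?_
  rw [Finset.mul_sum]
  refine Finset.sum_congr rfl fun l _ => ?_
  rw [braket_of_hasDerivAt_rhoFun hH hV hG hZpos hi1 hiJ hDi (hrhov k) (hrhov l),
    braket_of_hasDerivAt_rhoFun hH hV hG hZpos hj1 hjJ hDj (hrhov l) (hrhov k),
    braket_commutator_of_mulVec_eq_smul hS.isHermitian _ (hSv k) (hSv l),
    braket_commutator_of_mulVec_eq_smul hS.isHermitian _ (hSv l) (hSv k)]
  exact four_div_sq_add_sqrt_mul (hlampos k) (hlampos l) _ _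

/-- Commutator form of the Wigner–Yanase information matrix:
`I^{WY}_{ij}(φ) = −4 Tr[[A_i, √ρ] [A_j, √ρ]]`. -/
theorem wigner_yanase_commutator_form_pqc {d J : ℕ} (hd : 1 ≤ d)
    (H V G : _) (hH : ∀ j, (H j : Mat d).IsHermitian)
    (hV : ∀ j, V j ∈ Matrix.unitaryGroup (Fin d) ℂ)
    (hG : (G : Mat d).IsHermitian)
    (Z : ℝ) (hZpos : 0 < Z) (hZ : (NormedSpace.exp (-G)).trace = (Z : ℂ))
    (v : Fin d → Fin d → ℂ)
    (hortho : ∀ k l, star (v k) ⬝ᵥ v l = if k = l then 1 else 0)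
    (lam : Fin d → ℝ) (hlampos : ∀ k, 0 < lam k)
    (hrhov : ∀ k, (thermal G Z).mulVec (v k) = (lam k : ℂ) • v k)
    (φ : ℕ → ℝ) (i j : ℕ) (hi1 : 1 ≤ i) (hiJ : i ≤ J) (hj1 : 1 ≤ j) (hjJ : j ≤ J)
    (Di Dj : Mat d)
    (hDi : HasDerivAt (fun x : ℝ => rhoFun H V J G Z (Function.update φ i x)) Di (φ i))
    (hDj : HasDerivAt (fun x : ℝ => rhoFun H V J G Z (Function.update φ j x)) Dj (φ j)) :
    ∑ k : Fin d, ∑ l : Fin d,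
        ((4 / (Real.sqrt (lam k) + Real.sqrt (lam l)) ^ 2 : ℝ) : ℂ) *
          braket ((Ufull H V φ J).mulVec (v k)) Di ((Ufull H V φ J).mulVec (v l)) *
          braket ((Ufull H V φ J).mulVec (v l)) Dj ((Ufull H V φ J).mulVec (v k)) =
      -4 * ((Amat H V φ i * sqrtThermal G Z - sqrtThermal G Z * Amat H V φ i) *
          (Amat H V φ j * sqrtThermal G Z - sqrtThermal G Z * Amat H V φ j)).trace :=
  wigner_yanase_commutator_form_pqc_general H V G hH hV hG Z hZpos v hortho lam hlampos hrhov φ i j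
    hi1 hiJ hj1 hjJ Di Dj hDi hDj
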